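/- arXiv:2403.02488 — 8 statements merged into one kernel-verified Lean document; each statement's English description precedes it below -/
import Mathlib

section
/- Let A and A' be fields of characteristic 0 that are algebraic over ℚ. Then A and A' are isomorphic as fields if and only if the rational function fields A(t) and A'(t) (in one transcendental variable over A and A', respectively) are isomorphic as fields. -/
/-!
If `F` is algebraic over `k` and algebraically closed in an extension `L`, then `F` is exactly
the algebraic closure of `k` in `L`, so it is determined by `L` as a `k`-algebra. This applies to
`F ⊆ F(t)`, because every non-constant rational function is transcendental over the constants.
With `k = ℚ`, every ring isomorphism `A(t) ≃ A'(t)` is `ℚ`-linear and therefore restricts to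
`A ≃ A'`.
-/

open IntermediateField

theorem RatFunc.algebraicClosure_eq_bot (K : Type*) [Field K] :
    algebraicClosure K (RatFunc K) = ⊥ := by
  refine bot_unique fun f hf ↦ mem_bot.2 ?_
  by_contra hf_const
  refine transcendental_of_ne_C f ?_ (mem_algebraicClosure_iff.1 hf)
  rintro ⟨c, rfl⟩
  exact hf_const ⟨c, by rw [algebraMap_eq_C]⟩

section

variable {k F L : Type*} [Field k] [Field F] [Field L] [Algebra k F] [Algebra k L]
  [Algebra F L] [IsScalarTower k F L] [Algebra.IsAlgebraic k F]

theorem fieldRange_toAlgHom_eq_algebraicClosure (h : algebraicClosure F L = ⊥) :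
    (IsScalarTower.toAlgHom k F L).fieldRange = algebraicClosure k L := by
  rw [AlgHom.fieldRange_eq_map, ← (algebraicClosure.eq_top_iff (F := k) (E := F)).2 ‹_›]
  exact algebraicClosure.map_eq_of_algebraicClosure_eq_bot k h

noncomputable def algEquivAlgebraicClosureOfEqBot (h : algebraicClosure F L = ⊥) :
    F ≃ₐ[k] algebraicClosure k L :=
  (AlgEquiv.ofInjectiveField (IsScalarTower.toAlgHom k F L)).trans
    (equivOfEq (fieldRange_toAlgHom_eq_algebraicClosure h))

noncomputable def AlgEquiv.ofAlgebraicClosureEqBot {F' L' : Type*} [Field F'] [Field L']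
    [Algebra k F'] [Algebra k L'] [Algebra F' L'] [IsScalarTower k F' L']
    [Algebra.IsAlgebraic k F'] (h : _root_.algebraicClosure F L = ⊥)
    (h' : _root_.algebraicClosure F' L' = ⊥) (e : L ≃ₐ[k] L') : F ≃ₐ[k] F' :=
  (algEquivAlgebraicClosureOfEqBot h).trans <|
    e.algebraicClosure.trans (algEquivAlgebraicClosureOfEqBot h').symm

end

/-- For fields `A`, `A'` of characteristic 0 that are algebraic over `ℚ`,
`A ≅ A'` as fields iff the rational function fields `A(t) ≅ A'(t)` as fields. -/
theorem stmt_1 (A A' : Type) [Field A] [Field A'] [CharZero A] [CharZero A']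
    [Algebra.IsAlgebraic ℚ A] [Algebra.IsAlgebraic ℚ A'] :
    Nonempty (A ≃+* A') ↔ Nonempty (RatFunc A ≃+* RatFunc A') := by
  constructor
  · rintro ⟨e⟩
    exact ⟨IsFractionRing.ringEquivOfRingEquiv (Polynomial.mapEquiv e)⟩
  · rintro ⟨e⟩
    exact ⟨(AlgEquiv.ofAlgebraicClosureEqBot (RatFunc.algebraicClosure_eq_bot A)
      (RatFunc.algebraicClosure_eq_bot A') e.toRatAlgEquiv).toRingEquiv⟩
end

section
/- Let A and A' be fields of characteristic 0 that are algebraic over ℚ, and let f be a field isomorphism from the rational function field A(t) onto the rational function field A'(t'). Then f maps the subfield of constants A onto the subfield of constants A'; in particular, the restriction of f to A is a field isomorphism from A onto A'. -/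
/-!
A non-constant rational function is transcendental over the constants, so when `A` is algebraic
over `ℚ` the constants of `A(t)` are exactly its elements algebraic over `ℚ`. Every ring
isomorphism between fields of characteristic zero is `ℚ`-linear and hence preserves this set.
-/

open Function

theorem RingEquiv.exists_comp_eq_of_image_range_eq {R S R' S' : Type*} [Ring R] [Ring S]
    [Ring R'] [Ring S'] {i : R →+* S} {i' : R' →+* S'} (hi : Injective i) (hi' : Injective i')
    (f : S ≃+* S') (h : f '' Set.range i = Set.range i') :
    ∃ e : R ≃+* R', ∀ a, f (i a) = i' (e a) := by
  have hmap : i.range.map f.toRingHom = i'.range := SetLike.coe_injective h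
  let j := RingEquiv.ofLeftInverse (leftInverse_invFun hi)
  let j' := RingEquiv.ofLeftInverse (leftInverse_invFun hi')
  refine ⟨j.trans <| f.subringMap.trans <| (RingEquiv.subringCongr hmap).trans j'.symm,
    fun a ↦ ?_⟩
  exact (congrArg Subtype.val
    (j'.apply_symm_apply (RingEquiv.subringCongr hmap (f.subringMap (j a))))).symm

namespace RatFunc

theorem isAlgebraic_iff_mem_range_C {K : Type*} [Field K] {f : RatFunc K} :
    IsAlgebraic K f ↔ f ∈ Set.range (C : K →+* RatFunc K) := by
  refine ⟨fun hf ↦ ?_, ?_⟩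
  · by_contra hC
    exact transcendental_of_ne_C f (fun ⟨c, hc⟩ ↦ hC ⟨c, hc.symm⟩) hf
  · rintro ⟨c, rfl⟩
    exact isAlgebraic_algebraMap c

theorem isAlgebraic_rat_iff_mem_range_C {K : Type*} [Field K] [CharZero K]
    [Algebra.IsAlgebraic ℚ K] {f : RatFunc K} :
    IsAlgebraic ℚ f ↔ f ∈ Set.range (C : K →+* RatFunc K) := by
  rw [Algebra.IsAlgebraic.isAlgebraic_iff ℚ K, isAlgebraic_iff_mem_range_C]

theorem ringEquiv_image_range_C {K L : Type*} [Field K] [Field L] [CharZero K] [CharZero L]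
    [Algebra.IsAlgebraic ℚ K] [Algebra.IsAlgebraic ℚ L] (f : RatFunc K ≃+* RatFunc L) :
    f '' Set.range (C : K →+* RatFunc K) = Set.range (C : L →+* RatFunc L) := by
  ext y
  rw [Set.mem_image_iff_of_inverse f.symm_apply_apply f.apply_symm_apply,
    ← isAlgebraic_rat_iff_mem_range_C, ← isAlgebraic_rat_iff_mem_range_C]
  exact isAlgebraic_algHom_iff f.symm.toRatAlgEquiv.toAlgHom f.symm.injective

end RatFunc

/-- For fields `A`, `A'` of characteristic 0 algebraic over `ℚ`, any field
isomorphism `f : A(t) ≃ A'(t')` maps the subfield of constants `A` onto the subfield of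
constants `A'`; in particular the restriction of `f` gives a field isomorphism `A ≃ A'`. -/
theorem stmt_2 (A A' : Type) [Field A] [Field A'] [CharZero A] [CharZero A']
    [Algebra.IsAlgebraic ℚ A] [Algebra.IsAlgebraic ℚ A']
    (f : RatFunc A ≃+* RatFunc A') :
    f '' Set.range (RatFunc.C : A →+* RatFunc A) =
        Set.range (RatFunc.C : A' →+* RatFunc A') ∧
      ∃ e : A ≃+* A', ∀ a : A, f (RatFunc.C a) = RatFunc.C (e a) := by
  have hconst := RatFunc.ringEquiv_image_range_C f
  exact ⟨hconst, RingEquiv.exists_comp_eq_of_image_range_eq (RatFunc.C : A →+* _).injective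
    (RatFunc.C : A' →+* _).injective f hconst⟩
end

section
/- A field has at most one discrete Henselian valuation, up to equivalence of valuations: if K is a field and v and w are valuations on K with value group ℤ (i.e., valuations K → ℤ ∪ {∞}, equivalently surjective valuations into the multiplicative monoid-with-zero WithZero (Multiplicative ℤ)) such that the valuation subring of v and the valuation subring of w are both Henselian local rings, then v and w are equivalent valuations. -/
open Multiplicative Polynomial

private lemma val_int {K : Type} [Field K] (v : Valuation K (WithZero (Multiplicative ℤ)))
    {x : K} (hx : x ≠ 0) :
    ∃ n : ℤ, v x = ((ofAdd n : Multiplicative ℤ) : WithZero (Multiplicative ℤ)) := by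
  have h : v x ≠ 0 := by simpa using hx
  obtain ⟨γ, hγ⟩ := WithZero.ne_zero_iff_exists.mp h
  exact ⟨γ.toAdd, by simp [← hγ]⟩

private lemma coe_le_one (a : ℤ) :
    ((ofAdd a : Multiplicative ℤ) : WithZero (Multiplicative ℤ)) ≤ 1 ↔ a ≤ 0 := by
  rw [← WithZero.coe_one, WithZero.coe_le_coe]
  simp [← ofAdd_zero, Multiplicative.ofAdd_le]

private lemma one_lt_coe (a : ℤ) :
    (1 : WithZero (Multiplicative ℤ)) < ((ofAdd a : Multiplicative ℤ) : WithZero (Multiplicative ℤ)) ↔ 0 < a := by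
  rw [← WithZero.coe_one, WithZero.coe_lt_coe]
  simp [← ofAdd_zero]

private lemma calc1 (p q r : ℤ) (e n : ℕ) :
    ((ofAdd p : Multiplicative ℤ) : WithZero (Multiplicative ℤ)) ^ e
      * ((ofAdd q : Multiplicative ℤ) : WithZero (Multiplicative ℤ))
      * (((ofAdd r : Multiplicative ℤ) : WithZero (Multiplicative ℤ))⁻¹) ^ n
      = ((ofAdd ((e : ℤ) * p + q - (n : ℤ) * r) : Multiplicative ℤ) : WithZero (Multiplicative ℤ)) := by
  rw [← WithZero.coe_inv, ← WithZero.coe_pow, ← WithZero.coe_pow, ← WithZero.coe_mul,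
    ← WithZero.coe_mul, WithZero.coe_inj, ← ofAdd_neg, ← ofAdd_nsmul, ← ofAdd_nsmul,
    ← ofAdd_add, ← ofAdd_add]
  congr 1
  simp only [nsmul_eq_mul]
  ring

/-- Comparable case: if `O_w ⊆ O_v` but some `s` has `v s ≤ 1 < w s`, contradiction. -/
private lemma lemA {K : Type} [Field K] (v w : Valuation K (WithZero (Multiplicative ℤ)))
    (hv : Function.Surjective v) {s : K} (hs1 : v s ≤ 1) (hs2 : 1 < w s)
    (hc : ∀ x : K, w x ≤ 1 → v x ≤ 1) : False := by
  have hs0 : s ≠ 0 := by rintro rfl; simp at hs2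
  obtain ⟨t₀, ht₀⟩ := hv ((ofAdd (1 : ℤ) : Multiplicative ℤ) : WithZero (Multiplicative ℤ))
  have ht00 : t₀ ≠ 0 := by rintro rfl; simp at ht₀
  obtain ⟨S, hS⟩ := val_int v hs0
  obtain ⟨Ws, hWs⟩ := val_int w hs0
  obtain ⟨Wt, hWt⟩ := val_int w ht00
  have hSle : S ≤ 0 := by rwa [hS, coe_le_one] at hs1
  have hWs1 : 0 < Ws := by rwa [hWs, one_lt_coe] at hs2
  have key : ∀ n : ℕ, 0 < Wt - (n : ℤ) * Ws := by
    intro n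
    set y : K := t₀ ^ 0 * t₀ * (s⁻¹) ^ n with hy
    have hvy : v y = ((ofAdd ((0:ℕ) * (1:ℤ) + 1 - (n : ℤ) * S) : Multiplicative ℤ) : WithZero (Multiplicative ℤ)) := by
      rw [hy]
      simp only [map_mul, map_pow, map_inv₀, ht₀, hS]
      rw [calc1]
    have hnv : ¬ v y ≤ 1 := by
      rw [hvy, coe_le_one]
      have hprod : (n : ℤ) * S ≤ 0 :=
        mul_nonpos_of_nonneg_of_nonpos (Int.natCast_nonneg n) hSle
      push_cast
      intro hcon
      linarith
    have hnw : ¬ w y ≤ 1 := fun h => hnv (hc y h)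
    have hwy : w y = ((ofAdd ((0:ℕ) * Wt + Wt - (n : ℤ) * Ws) : Multiplicative ℤ) : WithZero (Multiplicative ℤ)) := by
      rw [hy]
      simp only [map_mul, map_pow, map_inv₀, hWt, hWs]
      rw [calc1]
    rw [hwy, coe_le_one] at hnw
    have := not_le.mp hnw
    push_cast at this
    linarith
  have h1 := key (Wt.toNat + 1)
  push_cast at h1
  have h4 : ((Wt.toNat : ℤ) + 1) * Ws ≥ (Wt.toNat : ℤ) + 1 :=
    le_mul_of_one_le_right (by positivity) hWs1
  linarith [Int.self_le_toNat Wt]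

/-- Incomparable case: `v s ≤ 1 < w s`, `w t ≤ 1 < v t`, `O_w` henselian: contradiction. -/
private lemma lemB {K : Type} [Field K] (v w : Valuation K (WithZero (Multiplicative ℤ)))
    (hv : Function.Surjective v) (hhw : HenselianLocalRing w.valuationSubring)
    {s t : K} (hs1 : v s ≤ 1) (hs2 : 1 < w s) (ht1 : w t ≤ 1) (ht2 : 1 < v t) : False := by
  have hs0 : s ≠ 0 := by rintro rfl; simp at hs2
  have ht0 : t ≠ 0 := by rintro rfl; simp at ht2
  obtain ⟨u, hu⟩ := hv ((ofAdd (1 : ℤ) : Multiplicative ℤ) : WithZero (Multiplicative ℤ))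
  have hu0 : u ≠ 0 := by rintro rfl; simp at hu
  obtain ⟨S, hS⟩ := val_int v hs0
  obtain ⟨Ws, hWs⟩ := val_int w hs0
  obtain ⟨T, hT⟩ := val_int v ht0
  obtain ⟨Wt, hWt⟩ := val_int w ht0
  obtain ⟨Uw, hUw⟩ := val_int w hu0
  have hSle : S ≤ 0 := by rwa [hS, coe_le_one] at hs1
  have hWs1 : 0 < Ws := by rwa [hWs, one_lt_coe] at hs2
  have hT1 : 0 < T := by rwa [hT, one_lt_coe] at ht2
  have hWtle : Wt ≤ 0 := by rwa [hWt, coe_le_one] at ht1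
  -- choose exponents
  set e : ℕ := if Even T then 1 else 0 with he
  have he01 : e = 0 ∨ e = 1 := by rw [he]; split <;> simp
  have heT : Odd ((e : ℤ) + T) := by
    by_cases h : Even T
    · have h1 : e = 1 := by simp [he, h]
      obtain ⟨k, hk⟩ := h
      exact ⟨k, by rw [h1]; push_cast; omega⟩
    · have h1 : e = 0 := by simp [he, h]
      obtain ⟨k, hk⟩ := Int.not_even_iff_odd.mp h
      exact ⟨k, by rw [h1]; push_cast; omega⟩
  set N : ℕ := Uw.natAbs + 1 with hN
  set a : K := u ^ e * t * (s⁻¹) ^ (2 * N) with ha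
  set A : ℤ := (e : ℤ) * 1 + T - ((2 * N : ℕ) : ℤ) * S with hA
  set W : ℤ := (e : ℤ) * Uw + Wt - ((2 * N : ℕ) : ℤ) * Ws with hW
  have hva : v a = ((ofAdd A : Multiplicative ℤ) : WithZero (Multiplicative ℤ)) := by
    rw [ha]
    simp only [map_mul, map_pow, map_inv₀, hu, hS, hT]
    rw [calc1]
  have hwa : w a = ((ofAdd W : Multiplicative ℤ) : WithZero (Multiplicative ℤ)) := by
    rw [ha]
    simp only [map_mul, map_pow, map_inv₀, hUw, hWs, hWt]
    rw [calc1]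
  have hSnn : (0:ℤ) ≤ -(((2 * N : ℕ) : ℤ) * S) := by
    have := mul_nonpos_of_nonneg_of_nonpos (Int.natCast_nonneg (2 * N)) hSle
    linarith
  have hApos : 0 < A := by
    rw [hA]
    have : (0:ℤ) ≤ (e : ℤ) * 1 := by positivity
    linarith
  have hAodd : Odd A := by
    have h2 : Even (((2 * N : ℕ) : ℤ) * S) := ⟨(N : ℤ) * S, by push_cast; ring⟩
    obtain ⟨k, hk⟩ := heT
    obtain ⟨m, hm⟩ := h2
    exact ⟨k - m, by rw [hA]; linarith⟩
  have hWneg : W < 0 := by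
    have h1 : (e : ℤ) * Uw ≤ (Uw.natAbs : ℤ) := by
      rcases he01 with h | h
      · simp [h]
      · simp only [h, Nat.cast_one, one_mul]
        exact le_trans (le_abs_self Uw) (le_of_eq (Int.abs_eq_natAbs Uw))
    have h2 : ((2 * N : ℕ) : ℤ) * Ws ≥ ((2 * N : ℕ) : ℤ) :=
      le_mul_of_one_le_right (Int.natCast_nonneg _) hWs1
    have h3 : ((2 * N : ℕ) : ℤ) = 2 * (Uw.natAbs : ℤ) + 2 := by rw [hN]; push_cast; ring
    rw [hW]
    linarith
  have hwa1 : w a < 1 := by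
    rw [hwa, ← WithZero.coe_one, WithZero.coe_lt_coe, ← ofAdd_zero]
    exact Multiplicative.ofAdd_lt.mpr hWneg
  have haR : a ∈ w.valuationSubring := (w.mem_valuationSubring_iff a).mpr (le_of_lt hwa1)
  set aR : w.valuationSubring := ⟨a, haR⟩ with haRdef
  set f : Polynomial w.valuationSubring := X ^ 2 - (X + C aR) with hf
  have hmon : f.Monic := by
    apply Polynomial.monic_X_pow_sub
    rw [Polynomial.degree_X_add_C]
    · norm_num
  have hev : f.eval 0 ∈ IsLocalRing.maximalIdeal w.valuationSubring := by
    have hev0 : f.eval 0 = -aR := by simp [hf]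
    rw [hev0, IsLocalRing.mem_maximalIdeal]
    intro hunit
    obtain ⟨b, hb⟩ := isUnit_iff_exists_inv.mp hunit
    have hbK : (-a) * (b : K) = 1 := by
      have := congrArg (fun z : w.valuationSubring => (z : K)) hb
      push_cast at this
      simpa [haRdef] using this
    have h1 : w a * w (b : K) = 1 := by
      have := congrArg w hbK
      simpa using this
    have hb1 : w (b : K) ≤ 1 := (w.mem_valuationSubring_iff _).mp b.2
    have h2 : w a * w (b : K) ≤ w a * 1 := mul_le_mul_right hb1 _
    rw [mul_one, h1] at h2
    exact absurd (lt_of_le_of_lt h2 hwa1) (lt_irrefl 1)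
  have hder : IsUnit (f.derivative.eval 0) := by
    have hd : f.derivative.eval 0 = -1 := by
      simp [hf]
    rw [hd]
    exact IsUnit.neg isUnit_one
  obtain ⟨r, hr, -⟩ := hhw.is_henselian f hmon 0 hev hder
  set x : K := (r : K) with hx
  have hax : a = x ^ 2 - x := by
    have h0 : r ^ 2 - (r + aR) = 0 := by
      have := hr
      rw [hf] at this
      simpa [Polynomial.IsRoot] using this
    have h2 : aR = r ^ 2 - r := by linear_combination -h0
    have h3 := congrArg (fun z : w.valuationSubring => (z : K)) h2
    push_cast at h3
    simpa [haRdef, hx] using h3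
  have hx1 : 1 < v x := by
    by_contra hle
    push_neg at hle
    have h1 : v a ≤ 1 := by
      rw [hax]
      refine le_trans (v.map_sub _ _) (max_le ?_ hle)
      rw [map_pow]
      exact pow_le_one' hle 2
    rw [hva, coe_le_one] at h1
    linarith
  have hx0 : x ≠ 0 := by intro h; rw [h] at hx1; simp at hx1
  obtain ⟨X₀, hX₀⟩ := val_int v hx0
  have hX₀pos : 0 < X₀ := by rwa [hX₀, one_lt_coe] at hx1
  have hvx2 : v (x ^ 2) = ((ofAdd (2 * X₀) : Multiplicative ℤ) : WithZero (Multiplicative ℤ)) := by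
    rw [map_pow, hX₀, ← WithZero.coe_pow, WithZero.coe_inj, ← ofAdd_nsmul,
      show (2 : ℕ) • X₀ = 2 * X₀ by simp [nsmul_eq_mul]]
  have hlt : v x < v (x ^ 2) := by
    rw [hX₀, hvx2, WithZero.coe_lt_coe]
    exact Multiplicative.ofAdd_lt.mpr (by omega)
  have hfinal : v a = ((ofAdd (2 * X₀) : Multiplicative ℤ) : WithZero (Multiplicative ℤ)) := by
    rw [hax, Valuation.map_sub_eq_of_lt_left _ hlt, hvx2]
  rw [hva, WithZero.coe_inj] at hfinal
  have hAeq : A = X₀ * 2 := by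
    have := congrArg Multiplicative.toAdd hfinal
    simpa using this
  obtain ⟨k, hk⟩ := hAodd
  omega

/-- A field has at most one discrete Henselian valuation, up to equivalence:
if `v`, `w` are surjective valuations on a field `K` with values in `WithZero (Multiplicative ℤ)`
(i.e. valuations with value group `ℤ`) whose valuation subrings are both Henselian local rings,
then `v` and `w` are equivalent. -/
theorem stmt_3 (K : Type) [Field K]
    (v w : Valuation K (WithZero (Multiplicative ℤ)))
    (hv : Function.Surjective v) (hw : Function.Surjective w)
    (hhv : HenselianLocalRing v.valuationSubring)
    (hhw : HenselianLocalRing w.valuationSubring) :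
    v.IsEquiv w := by
  rw [Valuation.isEquiv_iff_val_le_one]
  intro x
  constructor
  · intro hv1
    by_contra hw1
    have hs2 : 1 < w x := lt_of_not_ge hw1
    by_cases hc : ∀ y : K, w y ≤ 1 → v y ≤ 1
    · exact lemA v w hv hv1 hs2 hc
    · push_neg at hc
      obtain ⟨t, ht1, ht2⟩ := hc
      exact lemB v w hv hhw hv1 hs2 ht1 ht2
  · intro hw1
    by_contra hv1
    have hs2 : 1 < v x := lt_of_not_ge hv1
    by_cases hc : ∀ y : K, v y ≤ 1 → w y ≤ 1
    · exact lemA w v hw hw1 hs2 hc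
    · push_neg at hc
      obtain ⟨t, ht1, ht2⟩ := hc
      exact lemB v w hv hhw ht1 ht2 hw1 hs2
end

section
/- Let K be a field of characteristic 0 and let g be a nonzero polynomial in one variable over K. If g has, in the algebraic closure of K, a nonzero root of multiplicity at least m, then g has at least m + 1 nonzero coefficients (i.e., the support of g has cardinality at least m + 1). -/
open Polynomial

lemma support_mul_X_pow_card {L : Type*} [Field L] (h : L[X]) (k : ℕ) :
    (h * X ^ k).support.card = h.support.card := by
  have : (h * X ^ k).support = h.support.map ⟨(· + k), add_left_injective k⟩ := by
    ext n
    simp only [Finset.mem_map, Function.Embedding.coeFn_mk, mem_support_iff,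
      coeff_mul_X_pow']
    constructor
    · intro hn
      split_ifs at hn with hk
      · exact ⟨n - k, hn, Nat.sub_add_cancel hk⟩
      · simp at hn
    · rintro ⟨d, hd, rfl⟩
      simp [hd]
  rw [this, Finset.card_map]

lemma aux_lemma {L : Type*} [Field L] [CharZero L] (ξ : L) (hξ : ξ ≠ 0) :
    ∀ (m : ℕ) (p : L[X]), p ≠ 0 → (X - C ξ) ^ m ∣ p → m + 1 ≤ p.support.card := by
  intro m
  induction m with
  | zero =>
    intro p hp _
    simpa [Nat.succ_le_iff, Finset.card_pos, Polynomial.support_nonempty] using hp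
  | succ m ih =>
    intro p hp hdvd
    set k := p.natTrailingDegree with hk
    obtain ⟨h, hh⟩ : (X : L[X]) ^ k ∣ p := by
      rw [X_pow_dvd_iff]
      intro d hd
      exact coeff_eq_zero_of_lt_natTrailingDegree hd
    have hhne : h ≠ 0 := by rintro rfl; simp at hh; exact hp hh
    have hcop : IsCoprime ((X : L[X]) ^ k) ((X - C ξ) ^ (m + 1)) := by
      apply IsCoprime.pow
      refine ⟨C ξ⁻¹, -(C ξ⁻¹), ?_⟩
      have h1 : (C ξ⁻¹ : L[X]) * C ξ = 1 := by rw [← C_mul, inv_mul_cancel₀ hξ, C_1]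
      linear_combination h1
    have hdvdh : (X - C ξ) ^ (m + 1) ∣ h := by
      have := hdvd
      rw [hh] at this
      exact (hcop.symm.dvd_of_dvd_mul_left this)
    -- h.coeff 0 ≠ 0
    have h0 : h.coeff 0 ≠ 0 := by
      have : p.coeff k ≠ 0 := trailingCoeff_nonzero_iff_nonzero.mpr hp
      rw [hh, mul_comm, coeff_mul_X_pow'] at this
      simpa using this
    -- derivative of h
    have hd' : (X - C ξ) ^ m ∣ h.derivative := by
      obtain ⟨q, hq⟩ := hdvdh
      rw [hq, derivative_mul, derivative_pow]
      simp only [derivative_sub, derivative_X, derivative_C, sub_zero, mul_one]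
      exact dvd_add (Dvd.dvd.mul_right (Dvd.dvd.mul_left (pow_dvd_pow _ (by omega)) _) _)
        (Dvd.dvd.mul_right (pow_dvd_pow _ (by omega)) _)
    have hdne : h.derivative ≠ 0 := by
      intro h0'
      have : h.natDegree = 0 := natDegree_eq_zero_of_derivative_eq_zero h0'
      obtain ⟨c, rfl⟩ := natDegree_eq_zero.mp this
      have := natDegree_le_of_dvd hdvdh (by simpa using h0)
      simp [natDegree_pow, natDegree_X_sub_C, natDegree_C] at this
    have ihc := ih h.derivative hdne hd'
    -- support of h is at least derivative support + 1
    have hcard : h.derivative.support.card + 1 ≤ h.support.card := by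
      have hsub : insert 0 (h.derivative.support.map ⟨(· + 1), add_left_injective 1⟩)
          ⊆ h.support := by
        intro n hn
        rcases Finset.mem_insert.mp hn with rfl | hn
        · exact mem_support_iff.mpr h0
        · obtain ⟨d, hd, rfl⟩ := Finset.mem_map.mp hn
          rw [mem_support_derivative] at hd
          exact hd
      calc h.derivative.support.card + 1
          = (insert 0 (h.derivative.support.map ⟨(· + 1), add_left_injective 1⟩)).card := by
            rw [Finset.card_insert_of_notMem (by simp), Finset.card_map]
        _ ≤ h.support.card := Finset.card_le_card hsub
    have : p.support.card = h.support.card := by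
      rw [hh, mul_comm, support_mul_X_pow_card]
    omega


/-- Schinzel: Let `K` be a field of characteristic 0 and `g` a nonzero
polynomial over `K`. If `g` has a nonzero root of multiplicity at least `m` in the
algebraic closure of `K`, then `g` has at least `m + 1` nonzero coefficients. -/
theorem stmt_12 (K : Type) [Field K] [CharZero K] (g : Polynomial K) (hg : g ≠ 0)
    (m : ℕ) (ξ : AlgebraicClosure K) (hξ : ξ ≠ 0)
    (hdvd : (Polynomial.X - Polynomial.C ξ) ^ m ∣
      g.map (algebraMap K (AlgebraicClosure K))) :
    m + 1 ≤ g.support.card := by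
  have hinj : Function.Injective (algebraMap K (AlgebraicClosure K)) :=
    (algebraMap K (AlgebraicClosure K)).injective
  have hmapne : g.map (algebraMap K (AlgebraicClosure K)) ≠ 0 :=
    (Polynomial.map_ne_zero_iff hinj).mpr hg
  have := aux_lemma ξ hξ m _ hmapne hdvd
  rwa [support_map_of_injective g hinj] at this
end

section
/- Let G and H be additive subgroups of ℚ, each containing a nonzero element. Then G and H are isomorphic as abelian groups if and only if there exist nonzero elements g ∈ G and h ∈ H such that for every rational number q, q·g ∈ G if and only if q·h ∈ H. -/
lemma stmt_13_aux {G H : AddSubgroup ℚ} (φ : G ≃+ H) (g : G) (q : ℚ)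
    (hx : q * (g : ℚ) ∈ G) : q * (φ g : ℚ) ∈ H := by
  have hden : (q.den : ℤ) • (⟨q * g, hx⟩ : G) = q.num • g := by
    ext
    push_cast [zsmul_eq_mul]
    rw [← mul_assoc]
    congr 1
    rw [mul_comm, Rat.mul_den_eq_num]
  have h2 := congrArg φ hden
  rw [map_zsmul, map_zsmul] at h2
  have hv : (q.den : ℚ) * (φ ⟨q * g, hx⟩ : ℚ) = (q.num : ℚ) * (φ g : ℚ) := by
    have := congrArg (Subtype.val) h2
    push_cast [zsmul_eq_mul] at this
    exact_mod_cast this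
  have hd : (q.den : ℚ) ≠ 0 := by exact_mod_cast q.den_ne_zero
  have hq : ((φ ⟨q * g, hx⟩ : ℚ)) = q * (φ g : ℚ) := by
    apply mul_left_cancel₀ hd
    rw [hv, ← mul_assoc, mul_comm (q.den : ℚ) q, Rat.mul_den_eq_num]
  rw [← hq]
  exact (φ ⟨q * g, hx⟩).2

/-- Additive subgroups `G`, `H` of `ℚ`, each containing a nonzero element,
are isomorphic as abelian groups iff there are nonzero `g ∈ G`, `h ∈ H` such that for every
rational `q`, `q·g ∈ G ↔ q·h ∈ H`. -/
theorem stmt_13 (G H : AddSubgroup ℚ) (hG : ∃ g ∈ G, g ≠ 0) (hH : ∃ h ∈ H, h ≠ 0) :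
    Nonempty (G ≃+ H) ↔
      ∃ g ∈ G, ∃ h ∈ H, g ≠ 0 ∧ h ≠ 0 ∧ ∀ q : ℚ, q * g ∈ G ↔ q * h ∈ H := by
  constructor
  · rintro ⟨φ⟩
    obtain ⟨g, hg, hg0⟩ := hG
    refine ⟨g, hg, (φ ⟨g, hg⟩ : ℚ), (φ ⟨g, hg⟩).2, hg0, ?_, fun q => ?_⟩
    · intro h0
      have : φ ⟨g, hg⟩ = 0 := Subtype.ext h0
      have := φ.injective (this.trans (map_zero φ).symm)
      exact hg0 (congrArg Subtype.val this)
    constructor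
    · intro hx
      exact stmt_13_aux φ ⟨g, hg⟩ q hx
    · intro hx
      have := stmt_13_aux φ.symm (φ ⟨g, hg⟩) q hx
      simpa using this
  · rintro ⟨g, hg, h, hh, hg0, hh0, hiff⟩
    have memG : ∀ x : G, (x : ℚ) * h / g ∈ H := by
      intro x
      have h1 : (x : ℚ) / g * g ∈ G := by
        rw [div_mul_cancel₀ _ hg0]; exact x.2
      have := (hiff ((x : ℚ) / g)).mp h1
      rwa [div_mul_eq_mul_div] at this
    have memH : ∀ y : H, (y : ℚ) * g / h ∈ G := by
      intro y
      have h1 : (y : ℚ) / h * h ∈ H := by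
        rw [div_mul_cancel₀ _ hh0]; exact y.2
      have := (hiff ((y : ℚ) / h)).mpr h1
      rwa [div_mul_eq_mul_div] at this
    exact ⟨{
      toFun := fun x => ⟨(x : ℚ) * h / g, memG x⟩
      invFun := fun y => ⟨(y : ℚ) * g / h, memH y⟩
      left_inv := fun x => by
        ext; field_simp
      right_inv := fun y => by
        ext; field_simp
      map_add' := fun x y => by
        ext
        push_cast
        ring }⟩
end

section
/- For a set S of prime numbers, let G_S be the additive subgroup of ℚ generated by 1 together with the elements 1/p for p ∈ S. Then for any sets S and T of prime numbers, G_S and G_T are isomorphic as abelian groups if and only if the symmetric difference of S and T is finite. -/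
/-!
In terms of `p`-adic valuations, `G_S` is the set of rationals `x` with `v_p(x) ≥ -1` for
`p ∈ S` and `v_p(x) ≥ 0` for `p ∉ S`: one inclusion is the ultrametric inequality, the other
writes `1/d`, for squarefree `d`, as an integer combination of the `1/p` with `p ∣ d` (Bézout).
Hence multiplication by a prime `p ∉ S` maps `G_{S ∪ {p}}` isomorphically onto `G_S`, and
finitely many primes can be added to or removed from `S`.
Conversely, if `e : G_S ≃ G_T` and `q = e 1`, then `p · e(1/p) = q` for `p ∈ S`; when moreover
`p ∉ T`, `v_p(e(1/p)) ≥ 0` forces `v_p(q) ≥ 1`, so `p` divides the numerator of `q`.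
-/

/-- The additive subgroup of `ℚ` generated by `1` together with `1/p` for `p ∈ S`. -/
def groupOfPrimes (S : Set ℕ) : AddSubgroup ℚ :=
  AddSubgroup.closure (insert (1 : ℚ) {x : ℚ | ∃ p ∈ S, x = 1 / (p : ℚ)})

theorem one_div_mul_mem_of_coprime {H : AddSubgroup ℚ} {a b : ℕ} (hab : a.Coprime b)
    (ha : 1 / (a : ℚ) ∈ H) (hb : 1 / (b : ℚ) ∈ H) : 1 / ((a * b : ℕ) : ℚ) ∈ H := by
  rcases eq_or_ne a 0 with rfl | ha0
  · simp
  rcases eq_or_ne b 0 with rfl | hb0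
  · simp
  have hbezout : (1 : ℚ) = a * a.gcdA b + b * a.gcdB b := by
    exact_mod_cast
      (congrArg (Nat.cast : ℕ → ℤ) hab.gcd_eq_one).symm.trans (Nat.gcd_eq_gcd_ab a b)
  have hsplit :
      1 / ((a * b : ℕ) : ℚ) = a.gcdB b • (1 / (a : ℚ)) + a.gcdA b • (1 / (b : ℚ)) := by
    rw [zsmul_eq_mul, zsmul_eq_mul]
    push_cast
    field_simp
    linear_combination hbezout
  rw [hsplit]
  exact add_mem (zsmul_mem ha _) (zsmul_mem hb _)

theorem one_div_prod_mem {H : AddSubgroup ℚ} (h1 : (1 : ℚ) ∈ H) {s : Finset ℕ}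
    (hs : ∀ p ∈ s, p.Prime ∧ 1 / (p : ℚ) ∈ H) :
    1 / ((∏ p ∈ s, p : ℕ) : ℚ) ∈ H := by
  induction s using Finset.induction_on with
  | empty => simpa using h1
  | insert p s hps ih =>
    rw [Finset.prod_insert hps]
    have hp := hs p (Finset.mem_insert_self p s)
    have hs' := fun q hq => hs q (Finset.mem_insert_of_mem hq)
    refine one_div_mul_mem_of_coprime ?_ hp.2 (ih hs')
    exact Nat.Coprime.prod_right fun q hq =>
      (Nat.coprime_primes hp.1 (hs' q hq).1).2 (ne_of_mem_of_not_mem hq hps).symm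

theorem one_mem_groupOfPrimes (S : Set ℕ) : (1 : ℚ) ∈ groupOfPrimes S :=
  AddSubgroup.subset_closure (Set.mem_insert _ _)

theorem one_div_mem_groupOfPrimes {S : Set ℕ} {p : ℕ} (hp : p ∈ S) :
    1 / (p : ℚ) ∈ groupOfPrimes S :=
  AddSubgroup.subset_closure (Set.mem_insert_of_mem _ ⟨p, hp, rfl⟩)

theorem mem_groupOfPrimes_of_squarefree_den {S : Set ℕ} {x : ℚ} (hx : Squarefree x.den)
    (hS : ∀ p ∈ x.den.primeFactors, p ∈ S) : x ∈ groupOfPrimes S := by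
  have h := one_div_prod_mem (one_mem_groupOfPrimes S) (s := x.den.primeFactors)
    fun p hp => ⟨Nat.prime_of_mem_primeFactors hp, one_div_mem_groupOfPrimes (hS p hp)⟩
  rw [Nat.prod_primeFactors_of_squarefree hx] at h
  rw [← Rat.num_div_den x, div_eq_mul_one_div, ← zsmul_eq_mul]
  exact zsmul_mem h _

theorem padicValRat_natCast_of_prime {p r : ℕ} (hp : p.Prime) (hr : r.Prime) :
    padicValRat r p = if r = p then 1 else 0 := by
  have := Fact.mk hp
  have := Fact.mk hr
  split_ifs with h
  · subst h
    exact padicValRat.self hr.one_lt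
  · simp [padicValNat_primes h]

theorem padicValRat_eq_neg_of_dvd_den {p : ℕ} (hp : p.Prime) {x : ℚ} (h : p ∣ x.den) :
    padicValRat p x = -padicValNat p x.den := by
  have hnum : ¬ (p : ℤ) ∣ x.num := fun hnum =>
    hp.one_lt.ne' (Nat.eq_one_of_dvd_coprimes x.reduced (Int.natCast_dvd.1 hnum) h)
  rw [padicValRat_def, padicValInt.eq_zero_of_not_dvd hnum, Nat.cast_zero, zero_sub]

theorem setOf_padicValRat_pos_subset_divisors (x : ℚ) :
    {p | 0 < padicValRat p x} ⊆ x.num.natAbs.divisors := by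
  intro p hp
  have hnum : 0 < padicValNat p x.num.natAbs := by
    simp only [Set.mem_ofPred_eq, padicValRat_def, padicValInt] at hp
    omega
  refine Nat.mem_divisors.2 ⟨dvd_of_one_le_padicValNat hnum, fun h0 => ?_⟩
  simp [h0] at hnum

theorem le_padicValRat_of_mem_groupOfPrimes {S : Set ℕ} (hS : ∀ p ∈ S, p.Prime) {x : ℚ}
    (hx : x ∈ groupOfPrimes S) {p : ℕ} (hp : p.Prime) :
    -S.indicator 1 p ≤ padicValRat p x := by
  classical
  have := Fact.mk hp
  have hle : -S.indicator 1 p ≤ (0 : ℤ) :=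
    neg_nonpos.2 (Set.indicator_nonneg (fun _ _ => zero_le_one) p)
  induction hx using AddSubgroup.closure_induction with
  | mem g hg =>
    obtain rfl | ⟨q, hq, rfl⟩ := hg
    · simpa using hle
    · rw [one_div, padicValRat.inv, padicValRat_natCast_of_prime (hS q hq) hp]
      simp only [Set.indicator_apply]
      split_ifs <;> simp_all
  | zero => simpa using hle
  | add a b _ _ ha hb =>
    rcases eq_or_ne (a + b) 0 with hab | hab
    · simpa [hab] using hle
    · exact (le_min ha hb).trans (padicValRat.min_le_padicValRat_add hab)
  | neg a _ ha => rwa [padicValRat.neg]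

theorem mem_groupOfPrimes_of_le_padicValRat {S : Set ℕ} {x : ℚ}
    (hx : ∀ p, p.Prime → -S.indicator 1 p ≤ padicValRat p x) : x ∈ groupOfPrimes S := by
  have hind : ∀ p, S.indicator 1 p ≤ (1 : ℤ) :=
    Set.indicator_le_self' fun _ _ => zero_le_one
  refine mem_groupOfPrimes_of_squarefree_den ?_ fun p hp => ?_
  · refine Nat.squarefree_iff_prime_squarefree.2 fun p hp hpp => ?_
    have := Fact.mk hp
    have h2 : 2 ≤ padicValNat p x.den :=
      (padicValNat_dvd_iff_le x.den_nz).1 (by rwa [sq])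
    have := hx p hp
    rw [padicValRat_eq_neg_of_dvd_den hp (dvd_of_mul_right_dvd hpp)] at this
    have := hind p
    omega
  · have hp' := Nat.prime_of_mem_primeFactors hp
    have := Fact.mk hp'
    have hdvd := Nat.dvd_of_mem_primeFactors hp
    have h1 := one_le_padicValNat_of_dvd x.den_nz hdvd
    have := hx p hp'
    rw [padicValRat_eq_neg_of_dvd_den hp' hdvd] at this
    exact Set.mem_of_indicator_ne_zero (f := (1 : ℕ → ℤ)) (by omega)

theorem mul_mem_groupOfPrimes {S T : Set ℕ} (hS : ∀ p ∈ S, p.Prime) {q x : ℚ} (hq : q ≠ 0)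
    (hqST : ∀ p, p.Prime → -T.indicator 1 p ≤ padicValRat p q - S.indicator 1 p)
    (hx : x ∈ groupOfPrimes S) : q * x ∈ groupOfPrimes T := by
  rcases eq_or_ne x 0 with rfl | hx0
  · simp
  refine mem_groupOfPrimes_of_le_padicValRat fun p hp => ?_
  have := Fact.mk hp
  rw [padicValRat.mul hq hx0]
  linarith [hqST p hp, le_padicValRat_of_mem_groupOfPrimes hS hx hp]

def addEquivOfMulLeft {K : Type*} [DivisionRing K] {H H' : AddSubgroup K} (q : K)
    (hq : q ≠ 0)
    (h : ∀ x ∈ H, q * x ∈ H') (h' : ∀ y ∈ H', q⁻¹ * y ∈ H) : H ≃+ H' where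
  toFun x := ⟨q * x, h x x.2⟩
  invFun y := ⟨q⁻¹ * y, h' y y.2⟩
  left_inv x := Subtype.ext (inv_mul_cancel_left₀ hq x)
  right_inv y := Subtype.ext (mul_inv_cancel_left₀ hq y)
  map_add' a b := Subtype.ext (mul_add q a b)

theorem nonempty_addEquiv_insert {S : Set ℕ} (hS : ∀ p ∈ S, p.Prime) {p : ℕ} (hp : p.Prime) :
    Nonempty (groupOfPrimes (insert p S) ≃+ groupOfPrimes S) := by
  by_cases hpS : p ∈ S
  · rw [Set.insert_eq_of_mem hpS]
    exact ⟨AddEquiv.refl _⟩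
  have hS' : ∀ r ∈ insert p S, r.Prime := by
    rintro r (rfl | hr)
    exacts [hp, hS r hr]
  have hp0 : (p : ℚ) ≠ 0 := by exact_mod_cast hp.ne_zero
  refine ⟨addEquivOfMulLeft (p : ℚ) hp0 (fun x => mul_mem_groupOfPrimes hS' hp0 ?_)
    (fun y => mul_mem_groupOfPrimes hS (inv_ne_zero hp0) ?_)⟩ <;>
  · classical
    intro r hr
    have := Fact.mk hr
    simp only [padicValRat.inv, padicValRat_natCast_of_prime hp hr, Set.indicator_apply,
      Set.mem_insert_iff]
    split_ifs <;> simp_all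

theorem nonempty_addEquiv_union_of_finite {S F : Set ℕ} (hS : ∀ p ∈ S, p.Prime)
    (hF : F.Finite) (hFp : ∀ p ∈ F, p.Prime) :
    Nonempty (groupOfPrimes (S ∪ F) ≃+ groupOfPrimes S) := by
  induction F, hF using Set.Finite.induction_on with
  | empty =>
    rw [Set.union_empty]
    exact ⟨AddEquiv.refl _⟩
  | @insert p F _ _ ih =>
    have hFp' := fun q hq => hFp q (Set.mem_insert_of_mem p hq)
    obtain ⟨e⟩ := ih hFp'
    obtain ⟨e'⟩ := nonempty_addEquiv_insert (S := S ∪ F)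
      (fun q hq => hq.elim (hS q) (hFp' q)) (hFp p (Set.mem_insert p F))
    rw [Set.union_insert]
    exact ⟨e'.trans e⟩

theorem finite_diff_of_addEquiv {S T : Set ℕ} (hS : ∀ p ∈ S, p.Prime) (hT : ∀ p ∈ T, p.Prime)
    (e : groupOfPrimes S ≃+ groupOfPrimes T) : (S \ T).Finite := by
  set q : ℚ := (e ⟨1, one_mem_groupOfPrimes S⟩ : ℚ)
  have hq : q ≠ 0 := by simp [q]
  suffices S \ T ⊆ {p | 0 < padicValRat p q} from
    q.num.natAbs.divisors.finite_toSet.subset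
      (this.trans (setOf_padicValRat_pos_subset_divisors q))
  rintro p ⟨hpS, hpT⟩
  have hp := hS p hpS
  have := Fact.mk hp
  have hp0 : (p : ℚ) ≠ 0 := by exact_mod_cast hp.ne_zero
  set y : ℚ := (e ⟨1 / p, one_div_mem_groupOfPrimes hpS⟩ : ℚ)
  have hpy : (p : ℚ) * y = q := by
    have hsmul : p • (⟨1 / p, one_div_mem_groupOfPrimes hpS⟩ : groupOfPrimes S) =
        ⟨1, one_mem_groupOfPrimes S⟩ := Subtype.ext (by simp [hp0])
    have h := congrArg (fun z => (e z : ℚ)) hsmul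
    simp only [map_nsmul, AddSubgroup.coe_nsmul, nsmul_eq_mul] at h
    exact h
  have hy : y ≠ 0 := right_ne_zero_of_mul (hpy ▸ hq)
  have hvy : 0 ≤ padicValRat p y := by
    simpa [hpT] using le_padicValRat_of_mem_groupOfPrimes hT (e _).2 hp
  show 0 < padicValRat p q
  rw [← hpy, padicValRat.mul hp0 hy, padicValRat.self hp.one_lt]
  omega

/-- For sets `S`, `T` of primes, `G_S ≅ G_T` as abelian groups iff the
symmetric difference of `S` and `T` is finite. -/
theorem stmt_14 (S T : Set ℕ) (hS : ∀ p ∈ S, p.Prime) (hT : ∀ p ∈ T, p.Prime) :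
    Nonempty (groupOfPrimes S ≃+ groupOfPrimes T) ↔ ((S \ T) ∪ (T \ S)).Finite := by
  constructor
  · rintro ⟨e⟩
    exact (finite_diff_of_addEquiv hS hT e).union (finite_diff_of_addEquiv hT hS e.symm)
  · intro h
    obtain ⟨eS⟩ := nonempty_addEquiv_union_of_finite hS (h.subset Set.subset_union_right)
      fun p hp => hT p hp.1
    obtain ⟨eT⟩ := nonempty_addEquiv_union_of_finite hT (h.subset Set.subset_union_left)
      fun p hp => hS p hp.1
    rw [Set.union_sdiff_self, Set.union_comm] at eS
    rw [Set.union_sdiff_self] at eT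
    exact ⟨eS.symm.trans eT⟩
end

section
/- Let K and L be fields of characteristic 0 that are algebraic over ℚ. Then K and L are isomorphic as fields if and only if for every polynomial p with rational coefficients, p has a root in K if and only if p has a root in L. -/
/-- Fields `K`, `L` of characteristic 0, algebraic over `ℚ`, are isomorphic
as fields iff for every polynomial `p` over `ℚ`, `p` has a root in `K` iff it has a root
in `L`. -/
theorem stmt_15 (K L : Type) [Field K] [Field L] [CharZero K] [CharZero L]
    [Algebra.IsAlgebraic ℚ K] [Algebra.IsAlgebraic ℚ L] :
    Nonempty (K ≃+* L) ↔
      ∀ p : Polynomial ℚ,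
        (∃ x : K, Polynomial.aeval x p = 0) ↔ (∃ y : L, Polynomial.aeval y p = 0) := by
  constructor
  · rintro ⟨e⟩ p
    constructor
    · rintro ⟨x, hx⟩
      exact ⟨(e : K →+* L).toRatAlgHom x, by
        rw [Polynomial.aeval_algHom_apply, hx, map_zero]⟩
    · rintro ⟨y, hy⟩
      exact ⟨(e.symm : L →+* K).toRatAlgHom y, by
        rw [Polynomial.aeval_algHom_apply, hy, map_zero]⟩
  · intro h
    have h' : {p : Polynomial ℚ | ∃ x : K, Polynomial.aeval x p = 0} =
        {p | ∃ y : L, Polynomial.aeval y p = 0} := Set.ext fun p => h p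
    obtain ⟨e⟩ := Field.nonempty_algEquiv_of_aeval_eq_zero_eq h'
    exact ⟨e.toRingEquiv⟩
end

section
/- For a set S of prime numbers, let F_S be the subfield of ℝ generated over ℚ by the real square roots √p for p ∈ S. Then for any sets S and T of prime numbers, F_S and F_T are isomorphic as fields if and only if S = T. -/
/-!
Write `F_S = ℚ(√p : p ∈ S)`. An isomorphism `F_S ≃+* F_T` sends `√p` to a square root of `p`
in `F_T`, i.e. to `±√p`, so it suffices to show `√p ∈ F_T → p ∈ T`. Reducing to finitely many
primes, this is the classical fact that `√m ∉ ℚ(√q : q ∈ Q)` for squarefree `m > 1` prime to the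
finite set of primes `Q`, proved by induction on `Q`: writing `K = ℚ(√q : q ∈ Q')` and
`√m = a + b√q` with `a, b ∈ K`, squaring gives `2ab√q ∈ K`, so `ab = 0`; then either `√m = a ∈ K`
or `√(mq) = bq ∈ K`, both excluded by induction.
-/

open IntermediateField Polynomial

theorem IntermediateField.exists_eq_add_mul_of_mem_adjoin_simple {K E : Type*} [Field K] [Field E]
    [Algebra K E] {s : E} {c : K} (hs : s * s = algebraMap K E c) {x : E} (hx : x ∈ K⟮s⟯) :
    ∃ a b : K, x = algebraMap K E a + algebraMap K E b * s := by
  have hint : IsIntegral K s :=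
    ⟨X ^ 2 - C c, monic_X_pow_sub_C c two_ne_zero, by simp [sq, hs]⟩
  rw [← mem_toSubalgebra, adjoin_simple_toSubalgebra_of_isAlgebraic hint.isAlgebraic] at hx
  induction hx using Algebra.adjoin_induction with
  | mem x hx => exact ⟨0, 1, by simp [Set.mem_singleton_iff.mp hx]⟩
  | algebraMap r => exact ⟨r, 0, by simp⟩
  | add x y _ _ hx hy =>
    obtain ⟨a, b, rfl⟩ := hx
    obtain ⟨a', b', rfl⟩ := hy
    exact ⟨a + a', b + b', by simp only [map_add]; ring⟩
  | mul x y _ _ hx hy =>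
    obtain ⟨a, b, rfl⟩ := hx
    obtain ⟨a', b', rfl⟩ := hy
    exact ⟨a * a' + b * b' * c, a * b' + b * a', by
      simp only [map_add, map_mul]; linear_combination (algebraMap K E b * algebraMap K E b') * hs⟩

theorem IntermediateField.exists_eq_add_mul_of_mem_adjoin_insert {F E : Type*} [Field F]
    [Field E] [Algebra F E] {K : IntermediateField F E} {s : E} (hs : s * s ∈ K) {x : E}
    (hx : x ∈ adjoin F (insert s (K : Set E))) : ∃ a ∈ K, ∃ b ∈ K, x = a + b * s := by
  rw [Set.insert_eq, Set.union_comm, ← restrictScalars_adjoin] at hx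
  have hc : s * s = algebraMap K E ⟨s * s, hs⟩ := rfl
  obtain ⟨a, b, rfl⟩ := exists_eq_add_mul_of_mem_adjoin_simple hc hx
  exact ⟨a, a.2, b, b.2, rfl⟩

theorem IntermediateField.mem_of_ringHom_of_mul_self_eq_natCast {F E : Type*} [Field F]
    [Field E] [Algebra F E] {K L : IntermediateField F E} (f : K →+* L) {x : E} (hx : x ∈ K)
    {n : ℕ} (hxn : x * x = n) : x ∈ L := by
  have hfx : f ⟨x, hx⟩ * f ⟨x, hx⟩ = n := by
    rw [← map_mul, ← map_natCast f n]
    exact congrArg f (Subtype.ext (by simpa using hxn))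
  have hy : (f ⟨x, hx⟩ : E) * f ⟨x, hx⟩ = x * x := by
    rw [hxn]; exact_mod_cast congrArg Subtype.val hfx
  rcases mul_self_eq_mul_self_iff.mp hy with h | h
  · exact h ▸ (f ⟨x, hx⟩).2
  · exact neg_neg x ▸ h ▸ neg_mem (f ⟨x, hx⟩).2

noncomputable abbrev sqrtField (S : Set ℕ) : IntermediateField ℚ ℝ :=
  adjoin ℚ {x : ℝ | ∃ p ∈ S, x = √p}

theorem sqrtField_insert (q : ℕ) (S : Set ℕ) :
    sqrtField (insert q S) = adjoin ℚ (insert √q (sqrtField S : Set ℝ)) := by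
  have h : {x : ℝ | ∃ p ∈ insert q S, x = √p} = insert √q {x : ℝ | ∃ p ∈ S, x = √p} := by
    ext x
    simp
  rw [sqrtField, sqrtField, h, adjoin_insert_adjoin]

theorem sqrt_notMem_bot_of_squarefree {m : ℕ} (hm : Squarefree m) (hm1 : m ≠ 1) :
    √m ∉ (⊥ : IntermediateField ℚ ℝ) := by
  rintro ⟨r, hr⟩
  refine irrational_sqrt_natCast_iff.mpr ?_ ⟨r, hr⟩
  rintro ⟨k, rfl⟩
  exact hm1 (by rw [Nat.isUnit_iff.mp (hm k dvd_rfl), mul_one])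

theorem sqrt_notMem_sqrtField (Q : Finset ℕ) (hQ : ∀ q ∈ Q, q.Prime) (m : ℕ) (hm : Squarefree m)
    (hm1 : m ≠ 1) (hmQ : Disjoint m.primeFactors Q) : √m ∉ sqrtField Q := by
  classical
  induction Q using Finset.induction generalizing m with
  | empty => simpa [sqrtField] using sqrt_notMem_bot_of_squarefree hm hm1
  | @insert q Q hqQ ih =>
    have hq : q.Prime := hQ q (Finset.mem_insert_self q Q)
    replace ih := ih fun r hr => hQ r (Finset.mem_insert_of_mem hr)
    set K := sqrtField Q
    have hqK : √q ∉ K :=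
      ih q hq.squarefree hq.ne_one (by simpa [hq.primeFactors] using hqQ)
    have hqq : √q * √q = q := Real.mul_self_sqrt q.cast_nonneg
    have hmm : √m * √m = m := Real.mul_self_sqrt m.cast_nonneg
    have hqm : ¬ q ∣ m := fun h =>
      Finset.disjoint_right.mp hmQ (Finset.mem_insert_self q Q)
        (Nat.mem_primeFactors.mpr ⟨hq, h, hm.ne_zero⟩)
    intro hmem
    rw [Finset.coe_insert, sqrtField_insert] at hmem
    obtain ⟨a, ha, b, hb, hab⟩ :=
      exists_eq_add_mul_of_mem_adjoin_insert (by rw [hqq]; exact K.natCast_mem q) hmem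
    rcases eq_or_ne b 0 with rfl | hb0
    · exact ih m hm hm1 (hmQ.mono_right (Finset.subset_insert q Q)) (by simpa [hab] using ha)
    rcases eq_or_ne a 0 with rfl | ha0
    · have hcop : m.Coprime q := ((Nat.Prime.coprime_iff_not_dvd hq).mpr hqm).symm
      refine ih (m * q) (Nat.squarefree_mul_iff.mpr ⟨hcop, hm, hq.squarefree⟩)
        (by simp [hq.ne_one]) ?_ ?_
      · rw [hcop.primeFactors_mul, hq.primeFactors, Finset.disjoint_union_left,
          Finset.disjoint_singleton_left]
        exact ⟨hmQ.mono_right (Finset.subset_insert q Q), hqQ⟩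
      · have : √(↑(m * q) : ℝ) = b * q := by
          rw [Nat.cast_mul, Real.sqrt_mul m.cast_nonneg, hab, zero_add, mul_assoc, hqq]
        rw [this]
        exact mul_mem hb (K.natCast_mem q)
    · have h2ab : 2 * a * b * √q = m - a * a - b * b * q := by
        linear_combination -(√m + a + b * √q) * hab + hmm - b * b * hqq
      apply hqK
      have hne : 2 * a * b ≠ 0 := by positivity
      rw [← mul_div_cancel_left₀ (√q) hne, h2ab]
      exact div_mem (sub_mem (sub_mem (K.natCast_mem m) (mul_mem ha ha))
        (mul_mem (mul_mem hb hb) (K.natCast_mem q))) (mul_mem (mul_mem (ofNat_mem K 2) ha) hb)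

theorem sqrt_mem_sqrtField_iff {T : Set ℕ} (hT : ∀ p ∈ T, p.Prime) {p : ℕ} (hp : p.Prime) :
    √p ∈ sqrtField T ↔ p ∈ T := by
  classical
  refine ⟨fun hmem => ?_, fun hpT => subset_adjoin ℚ _ ⟨p, hpT, rfl⟩⟩
  by_contra hpT
  obtain ⟨F, hFT, hpF⟩ := exists_finset_of_mem_adjoin hmem
  have himage : {x : ℝ | ∃ p ∈ T, x = √p} = (fun p : ℕ => √(p : ℝ)) '' T := by
    ext x
    simp [eq_comm]
  rw [himage, Finset.subset_set_image_iff] at hFT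
  obtain ⟨Q, hQT, rfl⟩ := hFT
  refine sqrt_notMem_sqrtField Q (fun q hq => hT q (hQT hq)) p hp.squarefree hp.ne_one
    (by simpa [hp.primeFactors] using fun hpQ => hpT (hQT hpQ)) (adjoin.mono ℚ _ _ ?_ hpF)
  rw [Finset.coe_image]
  rintro _ ⟨q, hq, rfl⟩
  exact ⟨q, hq, rfl⟩

theorem subset_of_ringHom_sqrtField {S T : Set ℕ} (hS : ∀ p ∈ S, p.Prime)
    (hT : ∀ p ∈ T, p.Prime) (f : sqrtField S →+* sqrtField T) : S ⊆ T := fun p hp =>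
  (sqrt_mem_sqrtField_iff hT (hS p hp)).mp <|
    mem_of_ringHom_of_mul_self_eq_natCast f (subset_adjoin ℚ _ ⟨p, hp, rfl⟩)
      (Real.mul_self_sqrt p.cast_nonneg)

/-- For sets `S`, `T` of primes, the subfields `F_S = ℚ(√p : p ∈ S)` and
`F_T = ℚ(√p : p ∈ T)` of `ℝ` are isomorphic as fields iff `S = T`. -/
theorem stmt_16 (S T : Set ℕ) (hS : ∀ p ∈ S, p.Prime) (hT : ∀ p ∈ T, p.Prime) :
    Nonempty
        ((IntermediateField.adjoin ℚ {x : ℝ | ∃ p ∈ S, x = Real.sqrt p}) ≃+*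
          (IntermediateField.adjoin ℚ {x : ℝ | ∃ p ∈ T, x = Real.sqrt p})) ↔
      S = T := by
  constructor
  · rintro ⟨φ⟩
    exact (subset_of_ringHom_sqrtField hS hT φ.toRingHom).antisymm
      (subset_of_ringHom_sqrtField hT hS φ.symm.toRingHom)
  · rintro rfl
    exact ⟨RingEquiv.refl _⟩
end
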